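/- arXiv:1611.02777 — 3 statements merged into one kernel-verified Lean document; each statement's English description precedes it below -/
import Mathlib

section
/- Let C be a triangulated category with a t-structure. Suppose there is a distinguished triangle X \to Y \to Y[k] for some k > 0, where X \in C^{\le 0} and Hom^i(Y, Y) = 0 for all sufficiently large i. Then Y \in C^{\le 0}. -/
open CategoryTheory Limits Pretriangulated Triangulated

/-!
For `m ≥ 0` the object `X⟦m⟧` lies in `C^{≤ n}`, so by the shifted triangle every map
`Y⟦m⟧ ⟶ Z` with `Z ∈ C^{≥ n+1}` factors through `φ⟦m⟧ : Y⟦m⟧ ⟶ Y⟦k⟧⟦m⟧ ≅ Y⟦m+k⟧`. Iterating,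
any map `Y ⟶ Z` factors through some map `Y ⟶ Y⟦jk⟧` for every `j`, and these vanish for
large `j`. So `Y` is left orthogonal to `C^{≥ n+1}`, which characterises `C^{≤ n}`.
-/

namespace CategoryTheory.Triangulated.TStructure

variable {C : Type*} [Category C] [Preadditive C] [HasZeroObject C] [HasShift C ℤ]
  [∀ n : ℤ, (shiftFunctor C n).Additive] [Pretriangulated C] (t : TStructure C)

lemma exists_eq_mor₂_comp_of_isLE_of_isGE (T : Triangle C) (hT : T ∈ distTriang C)
    (n₀ n₁ : ℤ) (h : n₀ < n₁) (h₁ : t.IsLE T.obj₁ n₀) {Z : C} (hZ : t.IsGE Z n₁)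
    (g : T.obj₂ ⟶ Z) : ∃ g' : T.obj₃ ⟶ Z, g = T.mor₂ ≫ g' :=
  Triangle.yoneda_exact₂ T hT g (t.zero_of_isLE_of_isGE _ n₀ n₁ h h₁ hZ)

lemma exists_eq_shift_map_comp_of_distTriang {X Y Z : C} {k : ℤ} (f : X ⟶ Y) (φ : Y ⟶ Y⟦k⟧)
    (h : Y⟦k⟧ ⟶ X⟦(1 : ℤ)⟧) (hT : Triangle.mk f φ h ∈ distTriang C) (n : ℤ) [t.IsLE X n]
    [t.IsGE Z (n + 1)] {m : ℤ} (hm : 0 ≤ m) (g : Y⟦m⟧ ⟶ Z) :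
    ∃ g' : Y⟦k⟧⟦m⟧ ⟶ Z, g = φ⟦m⟧' ≫ g' := by
  have : t.IsLE (X⟦m⟧) (n - m) := t.isLE_shift X n m (n - m)
  have hXm : t.IsLE (X⟦m⟧) n := t.isLE_of_le _ (n - m) n
  obtain ⟨g', hg'⟩ : ∃ g' : Y⟦k⟧⟦m⟧ ⟶ Z, g = (m.negOnePow • φ⟦m⟧') ≫ g' :=
    t.exists_eq_mor₂_comp_of_isLE_of_isGE _ (Triangle.shift_distinguished _ hT m)
      n (n + 1) (by lia) hXm inferInstance g
  exact ⟨m.negOnePow • g', by rw [hg', Linear.units_smul_comp, Linear.comp_units_smul]⟩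

lemma eq_zero_of_distTriang_shift_of_isGE {X Y Z : C} {k : ℤ} (hk : 0 < k) (f : X ⟶ Y)
    (φ : Y ⟶ Y⟦k⟧) (h : Y⟦k⟧ ⟶ X⟦(1 : ℤ)⟧) (hT : Triangle.mk f φ h ∈ distTriang C) (n : ℤ)
    [t.IsLE X n] (hvanish : ∃ N : ℤ, ∀ i ≥ N, ∀ g : Y ⟶ Y⟦i⟧, g = 0) [t.IsGE Z (n + 1)]
    (g : Y ⟶ Z) : g = 0 := by
  have factors : ∀ j : ℕ, ∃ (c : Y ⟶ Y⟦(j : ℤ) * k⟧) (g' : Y⟦(j : ℤ) * k⟧ ⟶ Z), g = c ≫ g' := by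
    intro j
    induction j with
    | zero =>
      let e := (shiftFunctorZero' C ((0 : ℕ) * k) (by simp)).app Y
      exact ⟨e.inv, e.hom ≫ g, by simp⟩
    | succ j ih =>
      obtain ⟨c, g', rfl⟩ := ih
      obtain ⟨g'', rfl⟩ := t.exists_eq_shift_map_comp_of_distTriang f φ h hT n (by positivity) g'
      let e := (shiftFunctorAdd' C k (j * k) ((j + 1 : ℕ) * k) (by push_cast; ring)).app Y
      exact ⟨c ≫ φ⟦(j : ℤ) * k⟧' ≫ e.inv, e.hom ≫ g'', by simp⟩
  obtain ⟨N, hN⟩ := hvanish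
  obtain ⟨c, g', rfl⟩ := factors N.toNat
  rw [hN _ ?_ c, zero_comp]
  nlinarith [Int.self_le_toNat N, Int.natCast_nonneg N.toNat]

lemma isLE_of_distTriang_shift {X Y : C} {k : ℤ} (hk : 0 < k) (f : X ⟶ Y)
    (φ : Y ⟶ Y⟦k⟧) (h : Y⟦k⟧ ⟶ X⟦(1 : ℤ)⟧) (hT : Triangle.mk f φ h ∈ distTriang C) (n : ℤ)
    [t.IsLE X n] (hvanish : ∃ N : ℤ, ∀ i ≥ N, ∀ g : Y ⟶ Y⟦i⟧, g = 0) : t.IsLE Y n := by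
  rw [t.isLE_iff_orthogonal n (n + 1) rfl]
  intro Z g _
  exact t.eq_zero_of_distTriang_shift_of_isGE hk f φ h hT n hvanish g

end CategoryTheory.Triangulated.TStructure

/-- Let `C` be a triangulated category with a t-structure. Suppose there is a
distinguished triangle `X ⟶ Y ⟶ Y⟦k⟧ ⟶ X⟦1⟧` for some `k > 0`, where `X ∈ C^{≤0}` and
`Hom^i(Y,Y) = Hom(Y, Y⟦i⟧) = 0` for all sufficiently large `i`. Then `Y ∈ C^{≤0}`. -/
theorem mem_LE_zero_of_triangle_with_shift {C : Type*} [Category C] [Preadditive C]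
    [HasZeroObject C] [HasShift C ℤ] [∀ n : ℤ, (shiftFunctor C n).Additive] [Pretriangulated C]
    (t : TStructure C) (k : ℤ) (hk : 0 < k) (X Y : C) (hX : t.le 0 X)
    (f : X ⟶ Y) (φ : Y ⟶ Y⟦k⟧) (h : Y⟦k⟧ ⟶ X⟦(1 : ℤ)⟧)
    (hT : Triangle.mk f φ h ∈ distTriang C)
    (hvanish : ∃ N : ℤ, ∀ i ≥ N, ∀ g : Y ⟶ Y⟦i⟧, g = 0) :
    t.le 0 Y := by
  rw [t.le_iff_isLE] at hX ⊢
  exact t.isLE_of_distTriang_shift hk f φ h hT 0 hvanish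
end

section
/- Let C be a triangulated category with a t-structure, let Y be an object with an endomorphism \phi: Y \to Y[k] (k > 0) such that the iterated composition \phi^{2^n} := \phi[(2^n - 1)k] \circ \cdots \circ \phi[k] \circ \phi vanishes for n sufficiently large, and suppose Cone(\phi) \in C^{\le -1} and Cone(\phi[k]) \in C^{\le -1}. Then for all n \ge 1, Cone(\phi^{2^n}) \in C^{\le -1}; consequently Y[1] \oplus Y[2^n k] \in C^{\le -1} for large n, and hence Y \in C^{\le 0}. -/
open CategoryTheory Limits Pretriangulated Triangulated

variable {C : Type*} [Category C] [Preadditive C] [HasZeroObject C] [HasShift C ℤ]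
  [∀ n : ℤ, (shiftFunctor C n).Additive] [Pretriangulated C]

/-- Given `φ : Y ⟶ Y⟦k⟧`, this is the shifted map `φ⟦m⟧ : Y⟦m⟧ ⟶ Y⟦m + k⟧`. -/
noncomputable def shiftMapBy {Y : C} (k : ℤ) (φ : Y ⟶ Y⟦k⟧) (m : ℤ) : Y⟦m⟧ ⟶ Y⟦m + k⟧ :=
  φ⟦m⟧' ≫ (shiftFunctorAdd' C k m (m + k) (add_comm k m)).inv.app Y

/-- The iterated composition `φ^m := φ[(m-1)k] ∘ ⋯ ∘ φ[k] ∘ φ : Y ⟶ Y⟦m * k⟧` of a map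
`φ : Y ⟶ Y⟦k⟧`. -/
noncomputable def iterMap {Y : C} (k : ℤ) (φ : Y ⟶ Y⟦k⟧) : (m : ℕ) → (Y ⟶ Y⟦(m : ℤ) * k⟧)
  | 0 => (shiftFunctorZero C ℤ).inv.app Y ≫
      eqToHom (congrArg (fun z => (shiftFunctor C z).obj Y)
        (by push_cast; ring : (0 : ℤ) = ((0 : ℕ) : ℤ) * k))
  | (m + 1) => iterMap k φ m ≫ shiftMapBy k φ ((m : ℤ) * k) ≫
      eqToHom (congrArg (fun z => (shiftFunctor C z).obj Y)
        (by push_cast; ring : (m : ℤ) * k + k = ((m + 1 : ℕ) : ℤ) * k))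

/-!
If `Cone φ ≤ -1`, then `(Cone φ)⟦-1⟧ ≤ 0` precedes `φ` in a distinguished triangle, so every map
`Y ⟶ B` with `B ≥ 1` extends along `φ`. Shifting the triangle by `m ≥ 0` only lowers the degree
of the cone, so the same holds for every `φ⟦m⟧` and hence for every iterate `φ^m`. Since
`φ^{2^N} = 0`, all maps from `Y` to objects `≥ 1` vanish, i.e. `Y ≤ 0`. The other two claims
follow because `C^{≤ -1}` is closed under extensions and contains `Y⟦j⟧` for `j ≥ 1`:
`Cone φ^{2^n}` is an extension of `Y⟦1⟧` by `Y⟦2^n k⟧`, and so is the biproduct.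
-/

namespace CategoryTheory.Triangulated.TStructure

variable (t : TStructure C)

def ExtendsMapsToGE (n : ℤ) {X Y : C} (u : X ⟶ Y) : Prop :=
  ∀ ⦃B : C⦄, t.ge n B → ∀ f : X ⟶ B, ∃ g : Y ⟶ B, f = u ≫ g

variable {t}

lemma ExtendsMapsToGE.of_isIso (n : ℤ) {X Y : C} (u : X ⟶ Y) [IsIso u] :
    t.ExtendsMapsToGE n u :=
  fun _ _ f => ⟨inv u ≫ f, by simp⟩

lemma ExtendsMapsToGE.comp {n : ℤ} {X Y W : C} {u : X ⟶ Y} {v : Y ⟶ W}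
    (hu : t.ExtendsMapsToGE n u) (hv : t.ExtendsMapsToGE n v) : t.ExtendsMapsToGE n (u ≫ v) := by
  intro B hB f
  obtain ⟨g, rfl⟩ := hu hB f
  obtain ⟨h, rfl⟩ := hv hB g
  exact ⟨h, by simp⟩

lemma ExtendsMapsToGE.of_units_smul {n : ℤ} {X Y : C} {u : X ⟶ Y} (ε : ℤˣ)
    (hu : t.ExtendsMapsToGE n (ε • u)) : t.ExtendsMapsToGE n u := by
  intro B hB f
  obtain ⟨g, rfl⟩ := hu hB f
  exact ⟨ε • g, by rw [Linear.units_smul_comp, Linear.comp_units_smul]⟩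

lemma extendsMapsToGE_of_distTriang {X Y Z : C} {u : X ⟶ Y} {v : Y ⟶ Z} {w : Z ⟶ X⟦(1 : ℤ)⟧}
    (hT : Triangle.mk u v w ∈ distTriang C) {a n : ℤ} (hZ : t.le a Z) (han : a + 2 ≤ n) :
    t.ExtendsMapsToGE n u := by
  intro B hB f
  have hZ' : t.le (a + 1) (Z⟦(-1 : ℤ)⟧) := t.le_shift a (-1) (a + 1) (by omega) Z hZ
  exact Triangle.yoneda_exact₂ _ (inv_rot_of_distTriang _ hT) f
    (t.zero_of_isLE_of_isGE _ (a + 1) n (by omega) ⟨hZ'⟩ ⟨hB⟩)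

lemma extendsMapsToGE_shift_of_distTriang {X Y Z : C} {u : X ⟶ Y} {v : Y ⟶ Z}
    {w : Z ⟶ X⟦(1 : ℤ)⟧} (hT : Triangle.mk u v w ∈ distTriang C) {a n : ℤ} (hZ : t.le a Z)
    (han : a + 2 ≤ n) {m : ℤ} (hm : 0 ≤ m) : t.ExtendsMapsToGE n (u⟦m⟧') := by
  have hZm : t.le a (Z⟦m⟧) :=
    t.le_monotone (show a - m ≤ a by omega) _ (t.le_shift a m (a - m) (by omega) Z hZ)
  -- the shifted triangle carries the sign `(-1)^m` on its first map
  exact .of_units_smul m.negOnePow <|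
    extendsMapsToGE_of_distTriang (Triangle.shift_distinguished _ hT m) hZm han

lemma extendsMapsToGE_iterMap {k : ℤ} (hk : 0 ≤ k) {Y Z : C} {φ : Y ⟶ Y⟦k⟧} {v : Y⟦k⟧ ⟶ Z}
    {w : Z ⟶ Y⟦(1 : ℤ)⟧} (hT : Triangle.mk φ v w ∈ distTriang C) {a n : ℤ} (hZ : t.le a Z)
    (han : a + 2 ≤ n) (m : ℕ) : t.ExtendsMapsToGE n (iterMap k φ m) := by
  induction m with
  | zero =>
    have : IsIso (iterMap k φ 0) := by rw [iterMap]; infer_instance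
    exact .of_isIso n _
  | succ m ih =>
    rw [iterMap]
    refine ih.comp (.comp ?_ (.of_isIso n _))
    exact (extendsMapsToGE_shift_of_distTriang hT hZ han (by positivity)).comp (.of_isIso n _)

lemma le_of_extendsMapsToGE_zero {n : ℤ} {X Y : C} (h : t.ExtendsMapsToGE n (0 : X ⟶ Y)) :
    t.le (n - 1) X := by
  rw [t.le_iff_isLE, t.isLE_iff_orthogonal (n - 1) n (by omega)]
  intro B f hB
  obtain ⟨g, rfl⟩ := h hB.ge f
  exact zero_comp

end CategoryTheory.Triangulated.TStructure

theorem mem_LE_zero_of_nilpotent_selfshift_general [HasBinaryBiproducts C]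
    (t : TStructure C) (k : ℤ) (hk : 0 < k) (Y : C) (φ : Y ⟶ Y⟦k⟧)
    (hnil : ∃ N : ℕ, ∀ n ≥ N, iterMap k φ (2 ^ n) = 0)
    (Z₁ : C) (g₁ : Y⟦k⟧ ⟶ Z₁) (h₁ : Z₁ ⟶ Y⟦(1 : ℤ)⟧)
    (hT₁ : Triangle.mk φ g₁ h₁ ∈ distTriang C) (hZ₁ : t.le (-1) Z₁) :
    (∀ n : ℕ, 1 ≤ n → ∀ (Z : C) (g : Y⟦((2 ^ n : ℕ) : ℤ) * k⟧ ⟶ Z) (h : Z ⟶ Y⟦(1 : ℤ)⟧),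
        (Triangle.mk (iterMap k φ (2 ^ n)) g h ∈ distTriang C) → t.le (-1) Z) ∧
      (∃ N : ℕ, ∀ n ≥ N, t.le (-1) (Y⟦(1 : ℤ)⟧ ⊞ Y⟦((2 ^ n : ℕ) : ℤ) * k⟧)) ∧
      t.le 0 Y := by
  obtain ⟨N, hN⟩ := hnil
  have hY : t.le 0 Y := by
    have := TStructure.extendsMapsToGE_iterMap hk.le hT₁ hZ₁ (n := 1) (by norm_num) (2 ^ N)
    rw [hN N le_rfl] at this
    exact TStructure.le_of_extendsMapsToGE_zero this
  have hY_shift (m : ℤ) (hm : 1 ≤ m) : t.IsLE (Y⟦m⟧) (-1) :=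
    ⟨t.le_monotone (show -m ≤ -1 by omega) _ (t.le_shift 0 m (-m) (by omega) Y hY)⟩
  have hY_pow (n : ℕ) : t.IsLE (Y⟦((2 ^ n : ℕ) : ℤ) * k⟧) (-1) :=
    hY_shift _ (one_le_mul_of_one_le_of_one_le (by exact_mod_cast Nat.one_le_two_pow) hk)
  refine ⟨fun n _ Z g h hT => ?_, ⟨0, fun n _ => ?_⟩, hY⟩
  · exact (t.isLE₂ _ (rot_of_distTriang _ hT) (-1) (hY_pow n) (hY_shift 1 le_rfl)).le
  · exact (t.isLE₂ _ (binaryBiproductTriangle_distinguished _ _) (-1)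
      (hY_shift 1 le_rfl) (hY_pow n)).le

/-- Let `C` be a triangulated category with a t-structure, `Y` an object with a
map `φ : Y ⟶ Y⟦k⟧` (`k > 0`) such that the iterated composition `φ^{2^n}` vanishes for `n`
sufficiently large, and suppose `Cone(φ) ∈ C^{≤ -1}` and `Cone(φ⟦k⟧) ∈ C^{≤ -1}`. Then for all
`n ≥ 1`, `Cone(φ^{2^n}) ∈ C^{≤ -1}`; consequently `Y⟦1⟧ ⊞ Y⟦2^n k⟧ ∈ C^{≤ -1}` for large `n`,
and hence `Y ∈ C^{≤ 0}`. -/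
theorem mem_LE_zero_of_nilpotent_selfshift [HasBinaryBiproducts C]
    (t : TStructure C) (k : ℤ) (hk : 0 < k) (Y : C) (φ : Y ⟶ Y⟦k⟧)
    (hnil : ∃ N : ℕ, ∀ n ≥ N, iterMap k φ (2 ^ n) = 0)
    (Z₁ : C) (g₁ : Y⟦k⟧ ⟶ Z₁) (h₁ : Z₁ ⟶ Y⟦(1 : ℤ)⟧)
    (hT₁ : Triangle.mk φ g₁ h₁ ∈ distTriang C) (hZ₁ : t.le (-1) Z₁)
    (Z₂ : C) (g₂ : Y⟦k + k⟧ ⟶ Z₂) (h₂ : Z₂ ⟶ (Y⟦k⟧)⟦(1 : ℤ)⟧)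
    (hT₂ : Triangle.mk (shiftMapBy k φ k) g₂ h₂ ∈ distTriang C) (hZ₂ : t.le (-1) Z₂) :
    (∀ n : ℕ, 1 ≤ n → ∀ (Z : C) (g : Y⟦((2 ^ n : ℕ) : ℤ) * k⟧ ⟶ Z) (h : Z ⟶ Y⟦(1 : ℤ)⟧),
        (Triangle.mk (iterMap k φ (2 ^ n)) g h ∈ distTriang C) → t.le (-1) Z) ∧
      (∃ N : ℕ, ∀ n ≥ N, t.le (-1) (Y⟦(1 : ℤ)⟧ ⊞ Y⟦((2 ^ n : ℕ) : ℤ) * k⟧)) ∧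
      t.le 0 Y :=
  mem_LE_zero_of_nilpotent_selfshift_general t k hk Y φ hnil Z₁ g₁ h₁ hT₁ hZ₁
end

section
/- Let G be a group with elements T_0, T_1, ..., T_{n-1} satisfying the affine braid relations (T_i T_j = T_j T_i if i - j \not\equiv \pm 1 mod n, and T_i T_j T_i = T_j T_i T_j if i - j \equiv \pm 1 mod n), together with elements E_i for i in a set, and suppose there are relations T_i T_{i+1}^{-1} E_{i} T_{i+1} T_i^{-1} = E_{i+1} for 1 \le i \le n-2 (indices of E in {1,...,n-1}). Then (T_1 \cdots T_{n-1})^{-1}(T_{n-1} \cdots T_1) E_1 (T_{n-1} \cdots T_1)^{-1}(T_1 \cdots T_{n-1}) = E_{n-1}. -/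
section aux

variable {G : Type*} [Group G]

private lemma braid_aux1 (a b : G) (hb : a * b * a = b * a * b) :
    b⁻¹ * a⁻¹ * b = a * b⁻¹ * a⁻¹ := by
  calc b⁻¹ * a⁻¹ * b = b⁻¹ * a⁻¹ * (b * a * b) * (b⁻¹ * a⁻¹) := by group
    _ = b⁻¹ * a⁻¹ * (a * b * a) * (b⁻¹ * a⁻¹) := by rw [← hb]
    _ = a * b⁻¹ * a⁻¹ := by group

private lemma braid_aux2 (a b c : G) (hb : a * b * a = b * a * b)
    (hc : b * c = c * b) :
    (c * a * b)⁻¹ * b = a * b⁻¹ * (c * a)⁻¹ := by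
  have hc' : c⁻¹ * b = b * c⁻¹ := by
    have : Commute c⁻¹ b := ((show Commute b c from hc).symm.inv_left)
    exact this.eq
  calc (c * a * b)⁻¹ * b = b⁻¹ * a⁻¹ * (c⁻¹ * b) := by group
    _ = b⁻¹ * a⁻¹ * (b * c⁻¹) := by rw [hc']
    _ = (b⁻¹ * a⁻¹ * b) * c⁻¹ := by group
    _ = (a * b⁻¹ * a⁻¹) * c⁻¹ := by rw [braid_aux1 a b hb]
    _ = a * b⁻¹ * (c * a)⁻¹ := by group

end aux

/-- Let `G` be a group with elements `T_1, …, T_{n-1}` satisfying the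
braid relations of type `A_{n-1}`, and elements `E_1, …, E_{n-1}` satisfying
`T_i T_{i+1}⁻¹ E_i T_{i+1} T_i⁻¹ = E_{i+1}` for `1 ≤ i ≤ n-2`. Then
`(T_1 ⋯ T_{n-1})⁻¹ (T_{n-1} ⋯ T_1) E_1 (T_{n-1} ⋯ T_1)⁻¹ (T_1 ⋯ T_{n-1}) = E_{n-1}`. -/
theorem braid_conjugation_identity (G : Type*) [Group G] (n : ℕ) (hn : 2 ≤ n) (T E : ℕ → G)
    (hbraid : ∀ i, 1 ≤ i → i + 1 ≤ n - 1 →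
      T i * T (i + 1) * T i = T (i + 1) * T i * T (i + 1))
    (hcomm : ∀ i j, 1 ≤ i → j ≤ n - 1 → i + 2 ≤ j → T i * T j = T j * T i)
    (hconj : ∀ i, 1 ≤ i → i ≤ n - 2 →
      E (i + 1) = (T i * (T (i + 1))⁻¹) * E i * (T i * (T (i + 1))⁻¹)⁻¹) :
    (((List.range' 1 (n - 1)).map T).prod)⁻¹ * (((List.range' 1 (n - 1)).reverse.map T).prod) *
        E 1 *
        ((((List.range' 1 (n - 1)).reverse.map T).prod)⁻¹ *
          (((List.range' 1 (n - 1)).map T).prod)) =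
      E (n - 1) := by
  have main : ∀ m : ℕ, 1 ≤ m → m ≤ n - 1 →
      (((List.range' 1 m).map T).prod)⁻¹ * (((List.range' 1 m).reverse.map T).prod) *
        E 1 *
        ((((List.range' 1 m).reverse.map T).prod)⁻¹ *
          (((List.range' 1 m).map T).prod)) = E m := by
    intro m
    induction m with
    | zero => omega
    | succ k ih =>
      intro _ hk
      rcases Nat.eq_zero_or_pos k with hk0 | hk1
      · subst hk0
        have h0 : List.range' 1 1 = [1] := rfl
        rw [h0]
        simp only [List.map_cons, List.map_nil, List.prod_cons, List.prod_nil,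
          List.reverse_cons, List.reverse_nil, List.nil_append, mul_one]
        group
      · obtain ⟨j, rfl⟩ : ∃ j, k = j + 1 := ⟨k - 1, by omega⟩
        set c : G := ((List.range' 1 j).map T).prod with hc_def
        set a : G := T (j + 1) with ha_def
        set b : G := T (j + 2) with hb_def
        set Bp : G := ((List.range' 1 (j + 1)).reverse.map T).prod with hBp_def
        have hA1 : ((List.range' 1 (j + 1)).map T).prod = c * a := by
          rw [List.range'_1_concat]
          simp [hc_def, ha_def, Nat.add_comm 1 j]
        have hA2 : ((List.range' 1 (j + 2)).map T).prod = c * a * b := by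
          rw [show j + 2 = (j + 1) + 1 from rfl, List.range'_1_concat]
          simp [hA1, hb_def, Nat.add_comm 1 (j + 1), mul_assoc]
        have hB2 : ((List.range' 1 (j + 2)).reverse.map T).prod = b * Bp := by
          rw [show j + 2 = (j + 1) + 1 from rfl, List.range'_1_concat]
          simp [hBp_def, hb_def, Nat.add_comm 1 (j + 1)]
        have hb' : a * b * a = b * a * b := hbraid (j + 1) (by omega) (by omega)
        have hcomm' : b * c = c * b := by
          have : Commute b c := by
            apply Commute.list_prod_right
            intro x hx
            simp only [List.mem_map, List.mem_range'_1] at hx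
            obtain ⟨i, ⟨hi1, hi2⟩, rfl⟩ := hx
            exact ((hcomm i (j + 2) hi1 (by omega) (by omega))).symm
          exact this.eq
        have hword : (c * a * b)⁻¹ * b = a * b⁻¹ * (c * a)⁻¹ :=
          braid_aux2 a b c hb' hcomm'
        have hIH : (c * a)⁻¹ * Bp * E 1 * (Bp⁻¹ * (c * a)) = E (j + 1) := by
          rw [← hA1]; exact ih (by omega) (by omega)
        have hE : E (j + 2) = (a * b⁻¹) * E (j + 1) * (a * b⁻¹)⁻¹ :=
          hconj (j + 1) (by omega) (by omega)
        rw [hA2, hB2, hE, ← hIH]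
        have hstep : (c * a * b)⁻¹ * (b * Bp) * E 1 * ((b * Bp)⁻¹ * (c * a * b))
            = ((c * a * b)⁻¹ * b) * Bp * E 1 * Bp⁻¹ * ((c * a * b)⁻¹ * b)⁻¹ := by
          group
        rw [hstep, hword]
        group
  have h1 : 1 ≤ n - 1 := by omega
  exact main (n - 1) h1 le_rfl
end
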